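/- Let T be a triangle in ℝ². Then the set {μ ∈ ℝ : the sheared triangle A_μ T is equilateral}, where A_μ = [[1, μ],[0, 1]], contains at most two elements. -/

import Mathlib

/-!
The squared length of a sheared edge `(p, q)` is `(p + μ q)² + q²`, a quadratic polynomial in `μ`.
So two sheared edges have equal length either for every `μ` or for at most two values of `μ`.
If both equalities defining equilateral triangles held for every `μ`, then (evaluating at
`μ = 0, ±1`) the three edges would have coordinates of equal absolute value; as the edges sum
to zero, each coordinate vanishes and the triangle degenerates.
-/

/-- The shear map A_μ = [[1, μ],[0, 1]] on the Euclidean plane. -/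
def shear (μ : ℝ) (p : EuclideanSpace ℝ (Fin 2)) : EuclideanSpace ℝ (Fin 2) :=
  WithLp.toLp 2 ![p 0 + μ * p 1, p 1]

lemma exists_subset_pair_of_quadratic_eq_zero {K : Type*} [Field K] [NeZero (2 : K)]
    {a b c : K} (h : ¬(a = 0 ∧ b = 0 ∧ c = 0)) :
    ∃ x₁ x₂ : K, {x : K | a * (x * x) + b * x + c = 0} ⊆ {x₁, x₂} := by
  by_cases ha : a = 0
  · subst ha
    by_cases hb : b = 0
    · subst hb
      refine ⟨0, 0, fun x hx => absurd ⟨rfl, rfl, ?_⟩ h⟩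
      simpa using hx
    · refine ⟨-c / b, -c / b, fun x hx => ?_⟩
      replace hx : b * x + c = 0 := by simpa using hx
      simp only [Set.mem_insert_iff, Set.mem_singleton_iff, or_self]
      field_simp
      linear_combination hx
  · rcases Set.eq_empty_or_nonempty {x : K | a * (x * x) + b * x + c = 0} with hempty | ⟨x₀, hx₀⟩
    · exact ⟨0, 0, hempty ▸ Set.empty_subset _⟩
    · exact ⟨_, _, fun x hx =>
        (quadratic_eq_zero_iff ha ((discrim_eq_sq_of_quadratic_eq_zero hx₀).trans (sq _)) x).1 hx⟩

lemma eq_zero_of_add_add_eq_zero_of_sq_eq_sq {R : Type*} [CommRing R] [IsDomain R] [CharZero R]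
    {x y z : R} (hsum : x + y + z = 0) (hxy : x ^ 2 = y ^ 2) (hyz : y ^ 2 = z ^ 2) : x = 0 := by
  obtain rfl : z = -x - y := by linear_combination hsum
  rcases sq_eq_sq_iff_eq_or_eq_neg.1 hxy with rfl | rfl
  · have : (3 : R) * x ^ 2 = 0 := by linear_combination -hyz
    simpa using this
  · simpa using hyz

lemma dist_shear_sq (μ : ℝ) (x y : EuclideanSpace ℝ (Fin 2)) :
    dist (shear μ x) (shear μ y) ^ 2 = (x 0 - y 0 + μ * (x 1 - y 1)) ^ 2 + (x 1 - y 1) ^ 2 := by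
  rw [EuclideanSpace.dist_eq, Real.sq_sqrt (by positivity), Fin.sum_univ_two]
  simp only [shear, PiLp.toLp_apply, Matrix.cons_val_zero, Matrix.cons_val_one, Real.dist_eq,
    sq_abs]
  ring

lemma exists_subset_pair_of_dist_shear_eq {x y z w : EuclideanSpace ℝ (Fin 2)}
    (h : ¬∀ μ, dist (shear μ x) (shear μ y) = dist (shear μ z) (shear μ w)) :
    ∃ μ₁ μ₂ : ℝ,
      {μ : ℝ | dist (shear μ x) (shear μ y) = dist (shear μ z) (shear μ w)} ⊆ {μ₁, μ₂} := by
  have hsq (μ : ℝ) : dist (shear μ x) (shear μ y) = dist (shear μ z) (shear μ w) ↔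
      (x 0 - y 0 + μ * (x 1 - y 1)) ^ 2 + (x 1 - y 1) ^ 2 =
        (z 0 - w 0 + μ * (z 1 - w 1)) ^ 2 + (z 1 - w 1) ^ 2 := by
    rw [← sq_eq_sq₀ dist_nonneg dist_nonneg, dist_shear_sq, dist_shear_sq]
  obtain ⟨μ₁, μ₂, hsub⟩ := exists_subset_pair_of_quadratic_eq_zero
    (a := (x 1 - y 1) ^ 2 - (z 1 - w 1) ^ 2)
    (b := 2 * ((x 0 - y 0) * (x 1 - y 1) - (z 0 - w 0) * (z 1 - w 1)))
    (c := (x 0 - y 0) ^ 2 + (x 1 - y 1) ^ 2 - (z 0 - w 0) ^ 2 - (z 1 - w 1) ^ 2) <| by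
      rintro ⟨ha, hb, hc⟩
      exact h fun μ => (hsq μ).2 (by linear_combination ha * (μ * μ) + hb * μ + hc)
  exact ⟨μ₁, μ₂, fun μ hμ => hsub (show _ = 0 by linear_combination (hsq μ).1 hμ)⟩

lemma sq_sub_eq_sq_sub_of_forall_dist_shear_eq {x y z w : EuclideanSpace ℝ (Fin 2)}
    (h : ∀ μ, dist (shear μ x) (shear μ y) = dist (shear μ z) (shear μ w)) :
    (x 0 - y 0) ^ 2 = (z 0 - w 0) ^ 2 ∧ (x 1 - y 1) ^ 2 = (z 1 - w 1) ^ 2 := by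
  have h' (μ : ℝ) := congrArg (· ^ 2) (h μ)
  simp only [dist_shear_sq] at h'
  have h₀ := h' 0
  have h₁ := h' 1
  have h₂ := h' (-1)
  constructor
  · linear_combination (4 * h₀ - h₁ - h₂) / 2
  · linear_combination (h₁ + h₂ - 2 * h₀) / 2

lemma eq_of_forall_dist_shear_eq {x y z : EuclideanSpace ℝ (Fin 2)}
    (hxy : ∀ μ, dist (shear μ x) (shear μ y) = dist (shear μ y) (shear μ z))
    (hyz : ∀ μ, dist (shear μ y) (shear μ z) = dist (shear μ z) (shear μ x)) : x = y := by
  obtain ⟨h₀, h₁⟩ := sq_sub_eq_sq_sub_of_forall_dist_shear_eq hxy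
  obtain ⟨h₀', h₁'⟩ := sq_sub_eq_sq_sub_of_forall_dist_shear_eq hyz
  have e₀ := eq_zero_of_add_add_eq_zero_of_sq_eq_sq (by ring) h₀ h₀'
  have e₁ := eq_zero_of_add_add_eq_zero_of_sq_eq_sq (by ring) h₁ h₁'
  ext i
  fin_cases i
  · exact sub_eq_zero.1 e₀
  · exact sub_eq_zero.1 e₁

/-- the set of μ for which the sheared triangle A_μ T is equilateral has
at most two elements. -/
theorem stmt_10 (v : Fin 3 → EuclideanSpace ℝ (Fin 2))
    (hv : AffineIndependent ℝ v) :
    ∃ μ₁ μ₂ : ℝ,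
      {μ : ℝ | dist (shear μ (v 0)) (shear μ (v 1)) = dist (shear μ (v 1)) (shear μ (v 2)) ∧
        dist (shear μ (v 1)) (shear μ (v 2)) = dist (shear μ (v 2)) (shear μ (v 0))}
        ⊆ {μ₁, μ₂} := by
  by_cases h₀₁ : ∀ μ, dist (shear μ (v 0)) (shear μ (v 1)) = dist (shear μ (v 1)) (shear μ (v 2))
  · have h₁₂ : ¬∀ μ, dist (shear μ (v 1)) (shear μ (v 2)) = dist (shear μ (v 2)) (shear μ (v 0)) :=
      fun h₁₂ => hv.injective.ne (by decide : (0 : Fin 3) ≠ 1) (eq_of_forall_dist_shear_eq h₀₁ h₁₂)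
    obtain ⟨μ₁, μ₂, hsub⟩ := exists_subset_pair_of_dist_shear_eq h₁₂
    exact ⟨μ₁, μ₂, fun μ hμ => hsub hμ.2⟩
  · obtain ⟨μ₁, μ₂, hsub⟩ := exists_subset_pair_of_dist_shear_eq h₀₁
    exact ⟨μ₁, μ₂, fun μ hμ => hsub hμ.1⟩
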